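/- For every q ∈ (1/2, 1], there exists a unique ξ* > 0 such that f(ξ*, q) = 2, where f(ξ,q) = ξ·((1−q)Q(ξ,1) + q·Q(ξ,2)) / ((1−q)Q(ξ,2) + 2q·Q(ξ,3)); moreover f(ξ,q) < 2 for ξ ∈ (0, ξ*) and f(ξ,q) > 2 for ξ > ξ*. -/

import Mathlib

/-- `Q x y = e^{-x} ∑_{j ≥ y} x^j / j!`, the upper tail of a Poisson
distribution with mean `x`. -/
noncomputable def Q (x : ℝ) (y : ℕ) : ℝ :=
  Real.exp (-x) * ∑' j : ℕ, if y ≤ j then x ^ j / (Nat.factorial j) else 0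

noncomputable def f (ξ q : ℝ) : ℝ :=
  ξ * ((1 - q) * Q ξ 1 + q * Q ξ 2) / ((1 - q) * Q ξ 2 + 2 * q * Q ξ 3)

/-!
Clearing the common factor `e^{-ξ}` of the Poisson tails gives
`f ξ q = ξ (e^ξ - 1 - qξ) / ((1 + q)(e^ξ - 1 - ξ) - qξ²)`, whose denominator is positive for
`q ≤ 1`; hence `f ξ q - 2` has the sign of `g q ξ = ξ (e^ξ - 1 - qξ) - 2((1 + q)(e^ξ - 1 - ξ) - qξ²)`.
Now `g` and its first two derivatives vanish at `0`, and `g''' = e^ξ (ξ - (2q - 1))` changes sign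
exactly once on `(0, ∞)`, at `2q - 1 > 0`. A function vanishing at `0` whose derivative changes
sign once, from negative to positive, and which becomes positive, changes sign once itself;
descending from `g'''` to `g` gives the unique crossing.
-/

open Real
open scoped Nat

lemma summable_poisson_tail (x : ℝ) (y : ℕ) :
    Summable fun j : ℕ => if y ≤ j then x ^ j / j ! else 0 :=
  ((NormedSpace.expSeries_div_hasSum_exp x).summable.indicator {j | y ≤ j}).congr fun j => by
    simp [Set.indicator_apply]

lemma tsum_pow_div_factorial (x : ℝ) : ∑' j : ℕ, x ^ j / j ! = exp x := by
  rw [exp_eq_exp_ℝ]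
  exact (NormedSpace.expSeries_div_hasSum_exp x).tsum_eq

lemma Q_zero (x : ℝ) : Q x 0 = 1 := by
  simp [Q, tsum_pow_div_factorial, ← exp_add]

lemma Q_succ (x : ℝ) (y : ℕ) : Q x (y + 1) = Q x y - exp (-x) * (x ^ y / y !) := by
  have hsplit : (fun j : ℕ => if y ≤ j then x ^ j / j ! else 0) =
      fun j => (if y + 1 ≤ j then x ^ j / j ! else 0) + if j = y then x ^ y / y ! else 0 := by
    funext j
    rcases lt_trichotomy j y with h | rfl | h
    · simp [h.not_ge, show ¬ y + 1 ≤ j by omega, h.ne]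
    · simp
    · simp [h.le, h, h.ne']
  rw [Q, Q, hsplit, (summable_poisson_tail x (y + 1)).tsum_add (hasSum_ite_eq y _).summable,
    tsum_ite_eq]
  ring

lemma f_eq_div (ξ q : ℝ) :
    f ξ q = ξ * (exp ξ - 1 - q * ξ) / ((1 + q) * (exp ξ - 1 - ξ) - q * ξ ^ 2) := by
  have hQ1 : Q ξ 1 = 1 - exp (-ξ) := by simp [Q_succ, Q_zero]
  have hQ2 : Q ξ 2 = 1 - exp (-ξ) * (1 + ξ) := by simp [Q_succ, Q_zero]; ring
  have hQ3 : Q ξ 3 = 1 - exp (-ξ) * (1 + ξ + ξ ^ 2 / 2) := by simp [Q_succ, Q_zero]; ring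
  have hcancel : exp (-ξ) * exp ξ = 1 := by rw [← exp_add]; simp
  have hnum : ξ * ((1 - q) * Q ξ 1 + q * Q ξ 2) = exp (-ξ) * (ξ * (exp ξ - 1 - q * ξ)) := by
    rw [hQ1, hQ2]; linear_combination -ξ * hcancel
  have hden : (1 - q) * Q ξ 2 + 2 * q * Q ξ 3 =
      exp (-ξ) * ((1 + q) * (exp ξ - 1 - ξ) - q * ξ ^ 2) := by
    rw [hQ2, hQ3]; linear_combination -(1 + q) * hcancel
  rw [f, hnum, hden, mul_div_mul_left _ _ (exp_ne_zero _)]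

lemma denominator_pos {ξ q : ℝ} (hξ : 0 < ξ) (hq : -1 < q) (hq1 : q ≤ 1) :
    0 < (1 + q) * (exp ξ - 1 - ξ) - q * ξ ^ 2 := by
  have hexp := sum_le_exp_of_nonneg hξ.le 4
  norm_num [Finset.sum_range_succ] at hexp
  nlinarith [pow_pos hξ 2, pow_pos hξ 3]

noncomputable def g (q ξ : ℝ) : ℝ :=
  exp ξ * (ξ - (2 + 2 * q)) + q * ξ ^ 2 + (1 + 2 * q) * ξ + (2 + 2 * q)

noncomputable def g' (q ξ : ℝ) : ℝ := exp ξ * (ξ - (1 + 2 * q)) + 2 * q * ξ + (1 + 2 * q)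

noncomputable def g'' (q ξ : ℝ) : ℝ := exp ξ * (ξ - 2 * q) + 2 * q

noncomputable def g''' (q ξ : ℝ) : ℝ := exp ξ * (ξ - (2 * q - 1))

lemma sign_f_sub_two {ξ q : ℝ} (hξ : 0 < ξ) (hq : -1 < q) (hq1 : q ≤ 1) :
    SignType.sign (f ξ q - 2) = SignType.sign (g q ξ) := by
  have hD := denominator_pos hξ hq hq1
  rw [f_eq_div, div_sub' hD.ne', div_eq_mul_inv, sign_mul, sign_pos (inv_pos.mpr hD), mul_one, g]
  congr 1
  ring

lemma hasDerivAt_g (q x : ℝ) : HasDerivAt (g q) (g' q x) x := by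
  refine ((((hasDerivAt_exp x).fun_mul ((hasDerivAt_id' x).sub_const _)).fun_add
    ((hasDerivAt_pow 2 x).const_mul q)).fun_add ((hasDerivAt_id' x).const_mul _)).add_const _
    |>.congr_deriv ?_
  simp only [g']
  ring

lemma hasDerivAt_g' (q x : ℝ) : HasDerivAt (g' q) (g'' q x) x := by
  refine (((hasDerivAt_exp x).fun_mul ((hasDerivAt_id' x).sub_const _)).fun_add
    ((hasDerivAt_id' x).const_mul _)).add_const _ |>.congr_deriv ?_
  simp only [g'']
  ring

lemma hasDerivAt_g'' (q x : ℝ) : HasDerivAt (g'' q) (g''' q x) x := by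
  refine ((hasDerivAt_exp x).fun_mul ((hasDerivAt_id' x).sub_const _)).add_const _
    |>.congr_deriv ?_
  simp only [g''']
  ring

def SignChangeAt (F : ℝ → ℝ) (r : ℝ) : Prop :=
  (∀ x, 0 < x → x < r → F x < 0) ∧ F r = 0 ∧ ∀ x, r < x → 0 < F x

namespace SignChangeAt

variable {F G F' : ℝ → ℝ} {r : ℝ}

lemma eq_of_eq_zero (h : SignChangeAt F r) {x : ℝ} (hx : 0 < x) (hFx : F x = 0) : x = r := by
  rcases lt_trichotomy x r with hlt | heq | hgt
  · exact absurd hFx (h.1 x hx hlt).ne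
  · exact heq
  · exact absurd hFx (h.2.2 x hgt).ne'

lemma of_sign_eq (h : SignChangeAt F r) (hr : 0 < r)
    (hsign : ∀ x, 0 < x → SignType.sign (G x) = SignType.sign (F x)) : SignChangeAt G r := by
  refine ⟨fun x hx hxr => ?_, ?_, fun x hrx => ?_⟩
  · exact sign_eq_neg_one_iff.mp ((hsign x hx).trans (sign_eq_neg_one_iff.mpr (h.1 x hx hxr)))
  · exact sign_eq_zero_iff.mp ((hsign r hr).trans (sign_eq_zero_iff.mpr h.2.1))
  · exact sign_eq_one_iff.mp
      ((hsign x (hr.trans hrx)).trans (sign_eq_one_iff.mpr (h.2.2 x hrx)))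

lemma of_deriv (hd : ∀ x, HasDerivAt F (F' x) x) (hF0 : F 0 = 0) {b : ℝ} (hb : 0 < b)
    (h' : SignChangeAt F' b) {M : ℝ} (hM : 0 < M) (hFM : 0 < F M) :
    ∃ r, b < r ∧ SignChangeAt F r := by
  have hcont : Continuous F := continuous_iff_continuousAt.2 fun x => (hd x).continuousAt
  have hanti : StrictAntiOn F (Set.Icc 0 b) :=
    strictAntiOn_of_deriv_neg (convex_Icc 0 b) hcont.continuousOn fun x hx => by
      rw [interior_Icc] at hx
      exact (hd x).deriv ▸ h'.1 x hx.1 hx.2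
  have hmono : StrictMonoOn F (Set.Ici b) :=
    strictMonoOn_of_deriv_pos (convex_Ici b) hcont.continuousOn fun x hx => by
      rw [interior_Ici] at hx
      exact (hd x).deriv ▸ h'.2.2 x hx
  have hneg : ∀ x, 0 < x → x ≤ b → F x < 0 := fun x hx hxb =>
    hF0 ▸ hanti ⟨le_rfl, hb.le⟩ ⟨hx.le, hxb⟩ hx
  have hbM : b < M := not_le.mp fun hMb => (hneg M hM hMb).not_gt hFM
  obtain ⟨r, ⟨hbr, -⟩, hFr⟩ :=
    intermediate_value_Ioo hbM.le hcont.continuousOn ⟨hneg b hb le_rfl, hFM⟩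
  refine ⟨r, hbr, fun x hx hxr => ?_, hFr, fun x hrx => ?_⟩
  · rcases le_or_gt x b with hxb | hbx
    · exact hneg x hx hxb
    · exact hFr ▸ hmono hbx.le hbr.le hxr
  · exact hFr ▸ hmono hbr.le (hbr.le.trans hrx.le) hrx

end SignChangeAt

lemma exists_signChangeAt_g {q : ℝ} (hq : 1 / 2 < q) : ∃ r, 0 < r ∧ SignChangeAt (g q) r := by
  have h3 : SignChangeAt (g''' q) (2 * q - 1) :=
    ⟨fun x _ hx => mul_neg_of_pos_of_neg (exp_pos x) (by linarith), by simp [g'''],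
      fun x hx => mul_pos (exp_pos x) (by linarith)⟩
  obtain ⟨ξ₂, hξ₂, h2⟩ := h3.of_deriv (hasDerivAt_g'' q) (by simp [g'']) (by linarith)
    (M := 2 * q) (by linarith) (by simp [g'']; linarith)
  obtain ⟨ξ₁, hξ₁, h1⟩ := h2.of_deriv (hasDerivAt_g' q) (by simp [g']) (by linarith)
    (M := 1 + 2 * q) (by linarith) (by simp [g']; positivity)
  obtain ⟨ξs, hξs, h0⟩ := h1.of_deriv (hasDerivAt_g q) (by simp [g]) (by linarith)
    (M := 2 + 2 * q) (by linarith) (by simp [g]; positivity)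
  exact ⟨ξs, by linarith, h0⟩

/-- For `q ∈ (1/2, 1]` there is a unique `ξ* > 0` with `f(ξ*,q) = 2`, and
`f(ξ,q) < 2` on `(0, ξ*)` while `f(ξ,q) > 2` for `ξ > ξ*`. -/
theorem stmt13 (q : ℝ) (hq : 1 / 2 < q) (hq1 : q ≤ 1) :
    ∃! ξs : ℝ, 0 < ξs ∧ f ξs q = 2 ∧
      (∀ ξ, 0 < ξ → ξ < ξs → f ξ q < 2) ∧ (∀ ξ, ξs < ξ → 2 < f ξ q) := by
  obtain ⟨ξs, hξs, hg⟩ := exists_signChangeAt_g hq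
  have hf : SignChangeAt (fun ξ => f ξ q - 2) ξs :=
    hg.of_sign_eq hξs fun ξ hξ => sign_f_sub_two hξ (by linarith) hq1
  refine ⟨ξs, ⟨hξs, sub_eq_zero.mp hf.2.1, fun ξ hξ hξξs => sub_neg.mp (hf.1 ξ hξ hξξs),
    fun ξ hξξs => sub_pos.mp (hf.2.2 ξ hξξs)⟩, ?_⟩
  rintro y ⟨hy, hfy, -, -⟩
  exact hf.eq_of_eq_zero hy (sub_eq_zero.mpr hfy)
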